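/- Let U ⊆ {1,2,3}^k be a local strong USP, ℓ ≥ 2, and for each u ∈ U define A_u = {x ∈ (ℤ/ℓℤ)^k : x_j ≠ 0 iff u_j = 1}, B_u = {x : x_j ≠ 0 iff u_j = 2}, C_u = {x : x_j ≠ 0 iff u_j = 3}. Then the triples (A_u, B_u, C_u) for u ∈ U satisfy the simultaneous triple product property in (ℤ/ℓℤ)^k. -/
import Mathlib


/-- The allowed triples of symbols for a local strong USP; with symbols `1,2,3`
represented by `0,1,2`, these are `(1,2,1),(1,2,2),(1,1,3),(1,3,3),(2,2,3),(3,2,3)`. -/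
def allowedTriples : Set (Fin 3 × Fin 3 × Fin 3) :=
  {(0,1,0), (0,1,1), (0,0,2), (0,2,2), (1,1,2), (2,1,2)}

/-- A local strong USP of width `k` (symbols `1,2,3` represented by `0,1,2`). -/
def IsLocalStrongUSP {k : ℕ} (U : Set (Fin k → Fin 3)) : Prop :=
  ∀ u ∈ U, ∀ v ∈ U, ∀ w ∈ U, ¬(u = v ∧ v = w) →
    ∃ i : Fin k, (u i, v i, w i) ∈ allowedTriples

/-- The simultaneous triple product property for a family of triples of subsets of
an additive abelian group. -/
def SimultaneousTPP {H : Type*} [AddCommGroup H] {ι : Type*} (A B C : ι → Set H) : Prop :=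
  (∀ i, ∀ a ∈ A i, ∀ a' ∈ A i, ∀ b ∈ B i, ∀ b' ∈ B i, ∀ c ∈ C i, ∀ c' ∈ C i,
    a - a' + (b - b') + (c - c') = 0 → a = a' ∧ b = b' ∧ c = c') ∧
  ∀ i j k : ι, ∀ a ∈ A i, ∀ a' ∈ A j, ∀ b ∈ B j, ∀ b' ∈ B k, ∀ c ∈ C k, ∀ c' ∈ C i,
    a - a' + b - b' + c - c' = 0 → i = j ∧ j = k

lemma zero_of_iff {ℓ : ℕ} {x : ZMod ℓ} {P : Prop} (h : x ≠ 0 ↔ P) (hP : ¬ P) : x = 0 :=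
  not_not.mp (fun hx => hP (h.mp hx))

theorem stmt_18 {k : ℕ} (U : Set (Fin k → Fin 3)) (ℓ : ℕ) (hℓ : 2 ≤ ℓ)
    (hU : IsLocalStrongUSP U) :
    SimultaneousTPP
      (fun u : U => {x : Fin k → ZMod ℓ | ∀ j, x j ≠ 0 ↔ (u : Fin k → Fin 3) j = 0})
      (fun u : U => {x : Fin k → ZMod ℓ | ∀ j, x j ≠ 0 ↔ (u : Fin k → Fin 3) j = 1})
      (fun u : U => {x : Fin k → ZMod ℓ | ∀ j, x j ≠ 0 ↔ (u : Fin k → Fin 3) j = 2}) := by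
  constructor
  · rintro ⟨u, hu⟩ a ha a' ha' b hb b' hb' c hc c' hc' heq
    simp only [Set.mem_setOf_eq] at ha ha' hb hb' hc hc'
    have key : ∀ j, a j = a' j ∧ b j = b' j ∧ c j = c' j := by
      intro j
      have hj := congrFun heq j
      simp only [Pi.add_apply, Pi.sub_apply, Pi.zero_apply] at hj
      have h3 : u j = 0 ∨ u j = 1 ∨ u j = 2 := by omega
      rcases h3 with h | h | h
      · have hb0 := zero_of_iff (hb j) (by rw [h]; decide)
        have hb'0 := zero_of_iff (hb' j) (by rw [h]; decide)
        have hc0 := zero_of_iff (hc j) (by rw [h]; decide)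
        have hc'0 := zero_of_iff (hc' j) (by rw [h]; decide)
        refine ⟨?_, by rw [hb0, hb'0], by rw [hc0, hc'0]⟩
        rw [hb0, hb'0, hc0, hc'0] at hj
        have : a j - a' j = 0 := by linear_combination hj
        exact sub_eq_zero.mp this
      · have ha0 := zero_of_iff (ha j) (by rw [h]; decide)
        have ha'0 := zero_of_iff (ha' j) (by rw [h]; decide)
        have hc0 := zero_of_iff (hc j) (by rw [h]; decide)
        have hc'0 := zero_of_iff (hc' j) (by rw [h]; decide)
        refine ⟨by rw [ha0, ha'0], ?_, by rw [hc0, hc'0]⟩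
        rw [ha0, ha'0, hc0, hc'0] at hj
        have : b j - b' j = 0 := by linear_combination hj
        exact sub_eq_zero.mp this
      · have ha0 := zero_of_iff (ha j) (by rw [h]; decide)
        have ha'0 := zero_of_iff (ha' j) (by rw [h]; decide)
        have hb0 := zero_of_iff (hb j) (by rw [h]; decide)
        have hb'0 := zero_of_iff (hb' j) (by rw [h]; decide)
        refine ⟨by rw [ha0, ha'0], by rw [hb0, hb'0], ?_⟩
        rw [ha0, ha'0, hb0, hb'0] at hj
        have : c j - c' j = 0 := by linear_combination hj
        exact sub_eq_zero.mp this
    exact ⟨funext fun j => (key j).1, funext fun j => (key j).2.1, funext fun j => (key j).2.2⟩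
  · rintro ⟨u, hu⟩ ⟨v, hv⟩ ⟨w, hw⟩ a ha a' ha' b hb b' hb' c hc c' hc' heq
    simp only [Set.mem_setOf_eq] at ha ha' hb hb' hc hc'
    by_contra hne
    have hne' : ¬(w = u ∧ u = v) := by
      rintro ⟨h1, h2⟩
      exact hne ⟨Subtype.ext h2, Subtype.ext ((h1.trans h2).symm)⟩
    obtain ⟨i, hi⟩ := hU w hw u hu v hv hne'
    have hj := congrFun heq i
    simp only [Pi.add_apply, Pi.sub_apply, Pi.zero_apply] at hj
    simp only [allowedTriples, Set.mem_insert_iff, Set.mem_singleton_iff, Prod.mk.injEq] at hi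
    rcases hi with ⟨h1, h2, h3⟩ | ⟨h1, h2, h3⟩ | ⟨h1, h2, h3⟩ | ⟨h1, h2, h3⟩ | ⟨h1, h2, h3⟩ | ⟨h1, h2, h3⟩
    -- h1 : w i = _, h2 : u i = _, h3 : v i = _
    all_goals {
      first
      -- in each case exactly one of the six terms is nonzero; zero out the others
      | (have ha0 := zero_of_iff (ha i) (by rw [h2]; decide)
         have hb0 := zero_of_iff (hb i) (by rw [h3]; decide)
         have hb'0 := zero_of_iff (hb' i) (by rw [h1]; decide)
         have hc0 := zero_of_iff (hc i) (by rw [h1]; decide)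
         have hc'0 := zero_of_iff (hc' i) (by rw [h2]; decide)
         have hne0 : a' i ≠ 0 := (ha' i).mpr h3
         apply hne0
         rw [ha0, hb0, hb'0, hc0, hc'0] at hj
         linear_combination -hj)
      | (have ha0 := zero_of_iff (ha i) (by rw [h2]; decide)
         have ha'0 := zero_of_iff (ha' i) (by rw [h3]; decide)
         have hb'0 := zero_of_iff (hb' i) (by rw [h1]; decide)
         have hc0 := zero_of_iff (hc i) (by rw [h1]; decide)
         have hc'0 := zero_of_iff (hc' i) (by rw [h2]; decide)
         have hne0 : b i ≠ 0 := (hb i).mpr h3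
         apply hne0
         rw [ha0, ha'0, hb'0, hc0, hc'0] at hj
         linear_combination hj)
      | (have ha0 := zero_of_iff (ha i) (by rw [h2]; decide)
         have ha'0 := zero_of_iff (ha' i) (by rw [h3]; decide)
         have hb0 := zero_of_iff (hb i) (by rw [h3]; decide)
         have hc0 := zero_of_iff (hc i) (by rw [h1]; decide)
         have hc'0 := zero_of_iff (hc' i) (by rw [h2]; decide)
         have hne0 : b' i ≠ 0 := (hb' i).mpr h1
         apply hne0
         rw [ha0, ha'0, hb0, hc0, hc'0] at hj
         linear_combination -hj)
      | (have ha0 := zero_of_iff (ha i) (by rw [h2]; decide)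
         have ha'0 := zero_of_iff (ha' i) (by rw [h3]; decide)
         have hb0 := zero_of_iff (hb i) (by rw [h3]; decide)
         have hb'0 := zero_of_iff (hb' i) (by rw [h1]; decide)
         have hc'0 := zero_of_iff (hc' i) (by rw [h2]; decide)
         have hne0 : c i ≠ 0 := (hc i).mpr h1
         apply hne0
         rw [ha0, ha'0, hb0, hb'0, hc'0] at hj
         linear_combination hj)
      | (have ha'0 := zero_of_iff (ha' i) (by rw [h3]; decide)
         have hb0 := zero_of_iff (hb i) (by rw [h3]; decide)
         have hb'0 := zero_of_iff (hb' i) (by rw [h1]; decide)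
         have hc0 := zero_of_iff (hc i) (by rw [h1]; decide)
         have hc'0 := zero_of_iff (hc' i) (by rw [h2]; decide)
         have hne0 : a i ≠ 0 := (ha i).mpr h2
         apply hne0
         rw [ha'0, hb0, hb'0, hc0, hc'0] at hj
         linear_combination hj)
      | (have ha0 := zero_of_iff (ha i) (by rw [h2]; decide)
         have ha'0 := zero_of_iff (ha' i) (by rw [h3]; decide)
         have hb0 := zero_of_iff (hb i) (by rw [h3]; decide)
         have hb'0 := zero_of_iff (hb' i) (by rw [h1]; decide)
         have hc0 := zero_of_iff (hc i) (by rw [h1]; decide)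
         have hne0 : c' i ≠ 0 := (hc' i).mpr h2
         apply hne0
         rw [ha0, ha'0, hb0, hb'0, hc0] at hj
         linear_combination -hj) }
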